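/- arXiv:1511.09455 — 2 statements merged into one kernel-verified Lean document; each statement's English description precedes it below -/
import Mathlib

section
/- Let N(x,y) = Σ_{a,b≥0} N_{a,b} x^a y^b/(a! b!) in ℚ[[x,y]], where N_{a,b} is the number of non-ambiguous trees (over all nonempty binary tree shapes) with exactly a left children and b right children, and set L := x + y + ∫_x ∫_y N. Then ∂_x ∂_y L = (∂_x L) · (∂_y L), where ∂_x, ∂_y are formal partial derivatives and ∫_x, ∫_y formal integrations of power series. -/
/-!
Removing the root of a non-ambiguous tree leaves its left and right subtrees, either of which
may be empty. For a finite forest-ordered set `S`, let its weight be the proportion of the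
`|S|!` bijective labellings that decrease along ancestry. The top label must sit on a root, so
`|S| · weight S` is the sum of the weights of `S` minus one root. From this recursion, weights
are multiplicative over unions of incomparable sets and get divided by `|S| + 1` when a root is
put below all of `S`. The left (resp. right) children of `node l r` are those of `node l nil`
and of `node nil r`, so the weight `#NAT(B) / (a! b!)` of a shape factors accordingly, and
hanging a nonempty `l` as a left subtree divides its weight by its new number of left children:
this is `∫ₓ`. Summing over shapes gives `N = (1 + ∫ₓ N) (1 + ∫_y N)`, the `1`s accounting for
empty subtrees, while `∂ₓ ∂_y L = N`, `∂ₓ L = 1 + ∫_y N` and `∂_y L = 1 + ∫ₓ N`.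
-/

inductive BT : Type where
  | nil : BT
  | node : BT → BT → BT
  deriving DecidableEq

namespace BT

/-- The list of positions (paths from the root, `false` = left step, `true` = right step)
of the vertices of a binary tree. -/
def paths : BT → List (List Bool)
  | .nil => []
  | .node l r => [] :: (l.paths.map (List.cons false) ++ r.paths.map (List.cons true))

/-- Number of vertices. -/
def size (B : BT) : ℕ := B.paths.length

/-- The set of left children (positions ending with a left step). -/
def leftVertices (B : BT) : Finset (List Bool) :=
  B.paths.toFinset.filter (fun p => p.getLast? = some false)

/-- The set of right children (positions ending with a right step). -/
def rightVertices (B : BT) : Finset (List Bool) :=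
  B.paths.toFinset.filter (fun p => p.getLast? = some true)

end BT

/-- A non-ambiguous tree of shape `B`: bijective labellings of the left (resp. right)
children by `Fin |LV B|` (resp. `Fin |RV B|`), decreasing along ancestry. -/
structure NAT (B : BT) where
  fL : {p // p ∈ B.leftVertices} → Fin B.leftVertices.card
  fR : {p // p ∈ B.rightVertices} → Fin B.rightVertices.card
  bijL : Function.Bijective fL
  bijR : Function.Bijective fR
  ancL : ∀ u v : {p // p ∈ B.leftVertices}, u.1 <+: v.1 → u ≠ v → (fL v : ℕ) < fL u
  ancR : ∀ u v : {p // p ∈ B.rightVertices}, u.1 <+: v.1 → u ≠ v → (fR v : ℕ) < fR u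

/-- `natCount a b`: the number of non-ambiguous trees (over all nonempty shapes)
with exactly `a` left children and `b` right children. -/
noncomputable def natCount (a b : ℕ) : ℕ :=
  Nat.card {T : Σ B : BT, NAT B //
    T.1 ≠ BT.nil ∧ T.1.leftVertices.card = a ∧ T.1.rightVertices.card = b}

/-- The doubly exponential generating series `N(x,y) = Σ N_{a,b} x^a y^b/(a! b!)`. -/
noncomputable def natGF : MvPowerSeries (Fin 2) ℚ :=
  fun e => (natCount (e 0) (e 1) : ℚ) / ((e 0).factorial * (e 1).factorial)

/-- Formal integration with respect to `x` (the variable of index `0`). -/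
noncomputable def intX (f : MvPowerSeries (Fin 2) ℚ) : MvPowerSeries (Fin 2) ℚ :=
  fun e => if e 0 = 0 then 0 else f (e - Finsupp.single 0 1) / (e 0 : ℚ)

/-- Formal integration with respect to `y` (the variable of index `1`). -/
noncomputable def intY (f : MvPowerSeries (Fin 2) ℚ) : MvPowerSeries (Fin 2) ℚ :=
  fun e => if e 1 = 0 then 0 else f (e - Finsupp.single 1 1) / (e 1 : ℚ)


/-- Formal partial derivative with respect to `x` (the variable of index `0`). -/
noncomputable def dX (f : MvPowerSeries (Fin 2) ℚ) : MvPowerSeries (Fin 2) ℚ :=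
  fun e => ((e 0 : ℚ) + 1) * f (e + Finsupp.single 0 1)

/-- Formal partial derivative with respect to `y` (the variable of index `1`). -/
noncomputable def dY (f : MvPowerSeries (Fin 2) ℚ) : MvPowerSeries (Fin 2) ℚ :=
  fun e => ((e 1 : ℚ) + 1) * f (e + Finsupp.single 1 1)

/-- `L := x + y + ∫ₓ ∫_y N`. -/
noncomputable def natL : MvPowerSeries (Fin 2) ℚ :=
  MvPowerSeries.X 0 + MvPowerSeries.X 1 + intX (intY natGF)

lemma List.getLast?_cons_eq_some {α : Type*} {x c : α} {p : List α} :
    (x :: p).getLast? = some c ↔ p = [] ∧ x = c ∨ p.getLast? = some c := by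
  cases p <;> simp [List.getLast?_cons_cons]

open Finset

section Labellings

variable {α : Type*} (r : α → α → Prop)

def DecreasingLabelling (S : Finset α) : Type _ :=
  {f : S → Fin S.card // Function.Bijective f ∧ ∀ u v : S, r u v → u ≠ v → (f v : ℕ) < f u}

namespace DecreasingLabelling

instance (S : Finset α) : Finite (DecreasingLabelling r S) := Subtype.finite

lemma card_empty : Nat.card (DecreasingLabelling r (∅ : Finset α)) = 1 := by
  have h (u : (∅ : Finset α)) : False := notMem_empty _ u.2
  refine Nat.card_eq_one_iff_unique.2 ⟨⟨fun f g => Subtype.ext (funext fun u => (h u).elim)⟩, ?_⟩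
  exact ⟨⟨fun u => (h u).elim, ⟨fun u => (h u).elim, fun i => i.elim0⟩, fun u => (h u).elim⟩⟩

noncomputable def weight (S : Finset α) : ℚ :=
  Nat.card (DecreasingLabelling r S) / S.card.factorial

@[simp]
lemma weight_empty : weight r (∅ : Finset α) = 1 := by
  simp [weight, card_empty]

def roots [DecidableEq α] [DecidableRel r] (S : Finset α) : Finset α :=
  {v ∈ S | ∀ u ∈ S, r u v → u = v}

variable {r}

@[ext]
lemma ext {S : Finset α} {f g : DecreasingLabelling r S} (h : ∀ u, (f.1 u : ℕ) = g.1 u) : f = g :=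
  Subtype.ext (funext fun u => Fin.ext (h u))

section EraseTop

variable [DecidableEq α] {S : Finset α} {v : α}

def restrictErase (f : DecreasingLabelling r S) (hv : v ∈ S)
    (hf : (f.1 ⟨v, hv⟩ : ℕ) = S.card - 1) : DecreasingLabelling r (S.erase v) := by
  refine ⟨fun u => ⟨f.1 ⟨u, mem_of_mem_erase u.2⟩, ?_⟩, ?_, ?_⟩
  · have hne : f.1 ⟨u, mem_of_mem_erase u.2⟩ ≠ f.1 ⟨v, hv⟩ := fun h =>
      ne_of_mem_erase u.2 (congrArg Subtype.val (f.2.1.1 h))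
    have := (f.1 ⟨u, mem_of_mem_erase u.2⟩).2
    rw [card_erase_of_mem hv]
    omega
  · refine (Fintype.bijective_iff_injective_and_card _).2 ⟨fun u w h => ?_, by simp⟩
    have h' := congrArg Subtype.val (f.2.1.1 (Fin.ext (Fin.mk.inj_iff.1 h)))
    exact Subtype.ext h'
  · refine fun u w huw hne => f.2.2 _ _ huw fun h => hne ?_
    have h' := congrArg Subtype.val h
    exact Subtype.ext h'

def extendErase (hv : v ∈ S) (hroot : ∀ u ∈ S, r u v → u = v)
    (g : DecreasingLabelling r (S.erase v)) : DecreasingLabelling r S := by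
  have hlt (u : S) (hu : u.1 ≠ v) : (g.1 ⟨u, mem_erase.2 ⟨hu, u.2⟩⟩ : ℕ) < S.card - 1 :=
    card_erase_of_mem hv ▸ (g.1 _).2
  refine ⟨fun u => if h : u.1 = v then ⟨S.card - 1, Nat.sub_lt (card_pos.2 ⟨v, hv⟩) one_pos⟩
      else ⟨g.1 ⟨u, mem_erase.2 ⟨h, u.2⟩⟩, (hlt u h).trans (Nat.sub_lt_self one_pos
        (card_pos.2 ⟨v, hv⟩))⟩, ?_, ?_⟩
  · refine (Fintype.bijective_iff_injective_and_card _).2 ⟨fun u w h => Subtype.ext ?_, by simp⟩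
    dsimp only at h
    by_cases hu : u.1 = v <;> by_cases hw : w.1 = v
    · exact hu.trans hw.symm
    · rw [dif_pos hu, dif_neg hw, Fin.mk.injEq] at h
      exact absurd h (hlt w hw).ne'
    · rw [dif_neg hu, dif_pos hw, Fin.mk.injEq] at h
      exact absurd h (hlt u hu).ne
    · rw [dif_neg hu, dif_neg hw, Fin.mk.injEq] at h
      have h' := congrArg Subtype.val (g.2.1.1 (Fin.ext h))
      exact h'
  · intro u w huw hne
    dsimp only
    by_cases hu : u.1 = v <;> by_cases hw : w.1 = v
    · exact absurd (Subtype.ext (hu.trans hw.symm)) hne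
    · rw [dif_pos hu, dif_neg hw]
      exact hlt w hw
    · exact absurd (hroot u u.2 (hw ▸ huw)) hu
    · rw [dif_neg hu, dif_neg hw]
      refine g.2.2 _ _ huw fun h => hne (Subtype.ext ?_)
      have h' := congrArg Subtype.val h
      exact h'

def eraseTopEquiv (hv : v ∈ S) (hroot : ∀ u ∈ S, r u v → u = v) :
    {f : DecreasingLabelling r S // (f.1 ⟨v, hv⟩ : ℕ) = S.card - 1} ≃
      DecreasingLabelling r (S.erase v) where
  toFun f := restrictErase f.1 hv f.2
  invFun g := ⟨extendErase hv hroot g, by simp [extendErase]⟩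
  left_inv f := by
    refine Subtype.ext (ext fun u => ?_)
    simp only [extendErase, restrictErase]
    split_ifs with hu
    · obtain rfl : u = ⟨v, hv⟩ := Subtype.ext hu
      exact f.2.symm
    · rfl
  right_inv g := by
    ext u
    simp [extendErase, restrictErase, ne_of_mem_erase u.2]

end EraseTop

variable [DecidableEq α] [DecidableRel r]

lemma mem_roots {S : Finset α} {v : α} : v ∈ roots r S ↔ v ∈ S ∧ ∀ u ∈ S, r u v → u = v :=
  mem_filter

lemma roots_subset (S : Finset α) : roots r S ⊆ S :=
  filter_subset _ _

/-- The top label sits on a root; removing that root leaves a decreasing labelling of the rest. -/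
lemma card_eq_sum_roots {S : Finset α} (hS : S.Nonempty) :
    Nat.card (DecreasingLabelling r S) =
      ∑ v ∈ roots r S, Nat.card (DecreasingLabelling r (S.erase v)) := by
  have hlast : S.card - 1 < S.card := Nat.sub_lt hS.card_pos one_pos
  let top (f : DecreasingLabelling r S) : S := (Equiv.ofBijective _ f.2.1).symm ⟨_, hlast⟩
  have hfiber (v : S) : Nat.card {f // top f = v} =
      if ∀ u ∈ S, r u v → u = v then Nat.card (DecreasingLabelling r (S.erase v)) else 0 := by
    have e : {f // top f = v} ≃ {f : DecreasingLabelling r S // (f.1 v : ℕ) = S.card - 1} :=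
      Equiv.subtypeEquivRight fun f => by
        rw [Equiv.symm_apply_eq, Equiv.ofBijective_apply, Fin.ext_iff]
        exact eq_comm
    rw [Nat.card_congr e]
    split_ifs with hroot
    · exact Nat.card_congr (eraseTopEquiv v.2 hroot)
    · push Not at hroot
      obtain ⟨u, hu, huv, hne⟩ := hroot
      refine Nat.card_eq_zero.2 (Or.inl ⟨fun f => ?_⟩)
      have := f.1.2.2 ⟨u, hu⟩ v huv fun h => hne (congrArg Subtype.val h)
      have := (f.1.1 ⟨u, hu⟩).2
      omega
  rw [← Nat.card_congr (Equiv.sigmaFiberEquiv top), Nat.card_sigma, roots, sum_filter,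
    ← sum_coe_sort S]
  exact sum_congr rfl fun v _ => hfiber v

lemma card_mul_weight (S : Finset α) :
    S.card * weight r S = ∑ v ∈ roots r S, weight r (S.erase v) := by
  obtain rfl | hS := S.eq_empty_or_nonempty
  · simp [roots]
  have hfac : (S.card.factorial : ℚ) = S.card * (S.card - 1).factorial := by
    rw [← Nat.cast_mul, Nat.mul_factorial_pred hS.card_pos.ne']
  have hpos : (S.card : ℚ) ≠ 0 := by exact_mod_cast hS.card_pos.ne'
  rw [weight, card_eq_sum_roots hS, hfac, Nat.cast_sum, sum_div, mul_sum]
  refine sum_congr rfl fun v hv => ?_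
  rw [weight, card_erase_of_mem (mem_roots.1 hv).1, mul_div_assoc', mul_div_mul_left _ _ hpos]

lemma weight_insert {S : Finset α} {m : α} (hm : ∀ u ∈ S, r m u ∧ ¬ r u m) :
    weight r (insert m S) = weight r S / (S.card + 1) := by
  have hmS : m ∉ S := fun h => (hm m h).2 (hm m h).1
  have hroots : roots r (insert m S) = {m} := by
    ext v
    simp only [mem_roots, mem_insert, forall_eq_or_imp, mem_singleton]
    constructor
    · rintro ⟨rfl | hv, hmv, -⟩
      · rfl
      · exact (hmv (hm v hv).1).symm
    · rintro rfl
      exact ⟨Or.inl rfl, fun _ => rfl, fun u hu hum => ((hm u hu).2 hum).elim⟩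
  have h := card_mul_weight (r := r) (insert m S)
  rw [hroots, sum_singleton, erase_insert hmS, card_insert_of_notMem hmS] at h
  rw [eq_div_iff (by positivity), ← h]
  push_cast
  ring

lemma roots_map {β : Type*} [DecidableEq β] {r' : β → β → Prop} [DecidableRel r'] (g : α ↪ β)
    (hg : ∀ a b, r' (g a) (g b) ↔ r a b) (S : Finset α) :
    roots r' (S.map g) = (roots r S).map g := by
  simp only [roots, filter_map, Function.comp_def, forall_mem_map, hg, g.injective.eq_iff]

lemma weight_map {β : Type*} [DecidableEq β] {r' : β → β → Prop} [DecidableRel r'] (g : α ↪ β)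
    (hg : ∀ a b, r' (g a) (g b) ↔ r a b) (S : Finset α) :
    weight r' (S.map g) = weight r S := by
  induction S using Finset.strongInduction with
  | H S ih =>
    obtain rfl | hS := S.eq_empty_or_nonempty
    · simp
    have h := card_mul_weight (r := r') (S.map g)
    rw [roots_map g hg, sum_map, card_map] at h
    refine mul_left_cancel₀ (Nat.cast_ne_zero.2 hS.card_pos.ne') (h.trans ?_)
    rw [card_mul_weight]
    refine sum_congr rfl fun v hv => ?_
    rw [← map_erase, ih _ (erase_ssubset (mem_roots.1 hv).1)]

lemma roots_union {A B : Finset α} (hAB : ∀ a ∈ A, ∀ b ∈ B, ¬ r a b ∧ ¬ r b a) :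
    roots r (A ∪ B) = roots r A ∪ roots r B := by
  ext v
  simp only [mem_roots, mem_union, or_imp, forall_and]
  constructor
  · rintro ⟨hv | hv, hA, hB⟩
    exacts [Or.inl ⟨hv, hA⟩, Or.inr ⟨hv, hB⟩]
  · rintro (⟨hv, hA⟩ | ⟨hv, hB⟩)
    · exact ⟨Or.inl hv, hA, fun u hu huv => ((hAB v hv u hu).2 huv).elim⟩
    · exact ⟨Or.inr hv, fun u hu huv => ((hAB u hu v hv).1 huv).elim, hB⟩

/-- Induction on `|A| + |B|`: in `card_mul_weight` for `A ∪ B`, the roots of `A ∪ B` are those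
of `A` and those of `B`. -/
lemma weight_union {A B : Finset α} (hAB : ∀ a ∈ A, ∀ b ∈ B, a ≠ b ∧ ¬ r a b ∧ ¬ r b a) :
    weight r (A ∪ B) = weight r A * weight r B := by
  induction hn : A.card + B.card using Nat.strong_induction_on generalizing A B with
  | _ n ih =>
  rcases Nat.eq_zero_or_pos n with rfl | hpos
  · obtain ⟨hA, hB⟩ : A.card = 0 ∧ B.card = 0 := by omega
    rw [card_eq_zero] at hA hB
    simp [hA, hB]
  have hstep {A B : Finset α} (hn : A.card + B.card = n)
      (hAB : ∀ a ∈ A, ∀ b ∈ B, a ≠ b ∧ ¬ r a b ∧ ¬ r b a) :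
      ∑ v ∈ roots r A, weight r ((A ∪ B).erase v) = A.card * weight r A * weight r B := by
    rw [card_mul_weight, sum_mul]
    refine sum_congr rfl fun v hv => ?_
    have hv := (mem_roots.1 hv).1
    rw [erase_union_distrib, erase_eq_of_notMem fun h => (hAB v hv v h).1 rfl]
    refine ih _ ?_ (fun a ha b hb => hAB a (mem_of_mem_erase ha) b hb) rfl
    have := card_erase_of_mem hv
    have := card_pos.2 ⟨v, hv⟩
    omega
  have hBA : ∀ b ∈ B, ∀ a ∈ A, b ≠ a ∧ ¬ r b a ∧ ¬ r a b := fun b hb a ha =>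
    ⟨(hAB a ha b hb).1.symm, (hAB a ha b hb).2.2, (hAB a ha b hb).2.1⟩
  have hd : Disjoint A B := disjoint_left.2 fun a ha hb => (hAB a ha a hb).1 rfl
  have hstepB := hstep ((add_comm _ _).trans hn) hBA
  rw [union_comm B A] at hstepB
  have key := card_mul_weight (r := r) (A ∪ B)
  rw [card_union_of_disjoint hd, roots_union fun a ha b hb => (hAB a ha b hb).2,
    sum_union (hd.mono (roots_subset A) (roots_subset B)), hstep hn hAB, hstepB] at key
  refine mul_left_cancel₀ (a := ((A.card + B.card : ℕ) : ℚ)) (by rw [hn]; positivity) ?_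
  rw [key]
  push_cast
  ring

end DecreasingLabelling

end Labellings

namespace BT

def step (x : Bool) : List Bool ↪ List Bool := ⟨List.cons x, List.cons_injective⟩

@[simp] lemma step_apply (x : Bool) (p : List Bool) : step x p = x :: p := rfl

lemma step_prefix_step_iff (x : Bool) (p q : List Bool) : step x p <+: step x q ↔ p <+: q :=
  List.cons_prefix_cons.trans (and_iff_right rfl)

lemma nil_mem_paths {B : BT} : [] ∈ B.paths ↔ B ≠ nil := by
  cases B <;> simp [paths]

lemma leftVertices_node (l r : BT) :
    (node l r).leftVertices = (node l nil).leftVertices ∪ (node nil r).leftVertices := by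
  ext p; simp only [leftVertices, mem_filter, List.mem_toFinset, paths, mem_union]; grind

lemma rightVertices_node (l r : BT) :
    (node l r).rightVertices = (node l nil).rightVertices ∪ (node nil r).rightVertices := by
  ext p; simp only [rightVertices, mem_filter, List.mem_toFinset, paths, mem_union]; grind

lemma leftVertices_node_nil {l : BT} (hl : l ≠ nil) :
    (node l nil).leftVertices = (insert [] l.leftVertices).map (step false) := by
  ext (_ | ⟨_ | _, _ | ⟨y, p⟩⟩) <;>
    simp [leftVertices, paths, List.getLast?_cons_eq_some, nil_mem_paths, hl]

lemma rightVertices_node_nil (l : BT) :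
    (node l nil).rightVertices = l.rightVertices.map (step false) := by
  ext (_ | ⟨_ | _, _ | ⟨y, p⟩⟩) <;> simp [rightVertices, paths, List.getLast?_cons_eq_some]

lemma leftVertices_nil_node (r : BT) :
    (node nil r).leftVertices = r.leftVertices.map (step true) := by
  ext (_ | ⟨_ | _, _ | ⟨y, p⟩⟩) <;> simp [leftVertices, paths, List.getLast?_cons_eq_some]

lemma rightVertices_nil_node {r : BT} (hr : r ≠ nil) :
    (node nil r).rightVertices = (insert [] r.rightVertices).map (step true) := by
  ext (_ | ⟨_ | _, _ | ⟨y, p⟩⟩) <;>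
    simp [rightVertices, paths, List.getLast?_cons_eq_some, nil_mem_paths, hr]

lemma mem_paths_of_mem_leftVertices {B : BT} {p : List Bool} (hp : p ∈ B.leftVertices) :
    p ∈ B.paths ∧ p ≠ [] := by
  simp only [leftVertices, mem_filter, List.mem_toFinset] at hp
  exact ⟨hp.1, by rintro rfl; simp at hp⟩

lemma mem_paths_of_mem_rightVertices {B : BT} {p : List Bool} (hp : p ∈ B.rightVertices) :
    p ∈ B.paths ∧ p ≠ [] := by
  simp only [rightVertices, mem_filter, List.mem_toFinset] at hp
  exact ⟨hp.1, by rintro rfl; simp at hp⟩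

lemma incomparable_of_mem_paths {l r : BT} {p q : List Bool}
    (hp : p ∈ (node l nil).paths ∧ p ≠ []) (hq : q ∈ (node nil r).paths ∧ q ≠ []) :
    p ≠ q ∧ ¬ p <+: q ∧ ¬ q <+: p := by
  obtain ⟨hp, hp'⟩ := hp
  obtain ⟨hq, hq'⟩ := hq
  simp only [paths, List.map_nil, List.append_nil, List.nil_append, List.mem_cons,
    List.mem_map] at hp hq
  obtain rfl | ⟨p, -, rfl⟩ := hp
  · exact absurd rfl hp'
  obtain rfl | ⟨q, -, rfl⟩ := hq
  · exact absurd rfl hq'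
  simp [List.cons_prefix_cons]

lemma incomparable_leftVertices (l r : BT) :
    ∀ p ∈ (node l nil).leftVertices, ∀ q ∈ (node nil r).leftVertices,
      p ≠ q ∧ ¬ p <+: q ∧ ¬ q <+: p := fun _ hp _ hq =>
  incomparable_of_mem_paths (mem_paths_of_mem_leftVertices hp) (mem_paths_of_mem_leftVertices hq)

lemma incomparable_rightVertices (l r : BT) :
    ∀ p ∈ (node l nil).rightVertices, ∀ q ∈ (node nil r).rightVertices,
      p ≠ q ∧ ¬ p <+: q ∧ ¬ q <+: p := fun _ hp _ hq =>
  incomparable_of_mem_paths (mem_paths_of_mem_rightVertices hp)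
    (mem_paths_of_mem_rightVertices hq)

end BT

def NAT.equivLabellings (B : BT) :
    NAT B ≃ DecreasingLabelling (· <+: ·) B.leftVertices ×
      DecreasingLabelling (· <+: ·) B.rightVertices where
  toFun t := (⟨t.fL, t.bijL, t.ancL⟩, ⟨t.fR, t.bijR, t.ancR⟩)
  invFun p := ⟨p.1.1, p.2.1, p.1.2.1, p.2.2.1, p.1.2.2, p.2.2.2⟩
  left_inv _ := rfl
  right_inv _ := rfl

instance (B : BT) : Finite (NAT B) := Finite.of_equiv _ (NAT.equivLabellings B).symm

namespace BT

/-- The contribution of the shape `B` to the coefficient of `N`. -/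
noncomputable def weight (B : BT) : ℚ :=
  Nat.card (NAT B) / (B.leftVertices.card.factorial * B.rightVertices.card.factorial)

noncomputable def degree (B : BT) : Fin 2 →₀ ℕ :=
  Finsupp.single 0 B.leftVertices.card + Finsupp.single 1 B.rightVertices.card

@[simp] lemma degree_zero (B : BT) : B.degree 0 = B.leftVertices.card := by simp [degree]

@[simp] lemma degree_one (B : BT) : B.degree 1 = B.rightVertices.card := by simp [degree]

lemma degree_eq_iff {B : BT} {e : Fin 2 →₀ ℕ} :
    B.degree = e ↔ B.leftVertices.card = e 0 ∧ B.rightVertices.card = e 1 := by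
  rw [Finsupp.ext_iff, Fin.forall_fin_two, degree_zero, degree_one]

lemma weight_eq_mul (B : BT) :
    B.weight = DecreasingLabelling.weight (· <+: ·) B.leftVertices *
      DecreasingLabelling.weight (· <+: ·) B.rightVertices := by
  rw [weight, Nat.card_congr (NAT.equivLabellings B), Nat.card_prod, Nat.cast_mul,
    DecreasingLabelling.weight, DecreasingLabelling.weight, mul_div_mul_comm]

lemma weight_node (l r : BT) : (node l r).weight = (node l nil).weight * (node nil r).weight := by
  rw [weight_eq_mul, weight_eq_mul, weight_eq_mul, leftVertices_node, rightVertices_node,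
    DecreasingLabelling.weight_union (incomparable_leftVertices l r),
    DecreasingLabelling.weight_union (incomparable_rightVertices l r)]
  ring

lemma weight_node_nil {l : BT} (hl : l ≠ nil) :
    (node l nil).weight = l.weight / (l.leftVertices.card + 1) := by
  rw [weight_eq_mul, weight_eq_mul, leftVertices_node_nil hl, rightVertices_node_nil,
    DecreasingLabelling.weight_map _ (step_prefix_step_iff false),
    DecreasingLabelling.weight_map _ (step_prefix_step_iff false),
    DecreasingLabelling.weight_insert fun u hu =>
      ⟨List.nil_prefix, fun h => (mem_paths_of_mem_leftVertices hu).2 (List.prefix_nil.1 h)⟩]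
  ring

lemma weight_nil_node {r : BT} (hr : r ≠ nil) :
    (node nil r).weight = r.weight / (r.rightVertices.card + 1) := by
  rw [weight_eq_mul, weight_eq_mul, leftVertices_nil_node, rightVertices_nil_node hr,
    DecreasingLabelling.weight_map _ (step_prefix_step_iff true),
    DecreasingLabelling.weight_map _ (step_prefix_step_iff true),
    DecreasingLabelling.weight_insert fun u hu =>
      ⟨List.nil_prefix, fun h => (mem_paths_of_mem_rightVertices hu).2 (List.prefix_nil.1 h)⟩]
  ring

lemma weight_leaf : (node nil nil).weight = 1 := by
  rw [weight_eq_mul, leftVertices_nil_node, rightVertices_node_nil]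
  simp [leftVertices, rightVertices, paths]

lemma card_union_of_incomparable {S T : Finset (List Bool)}
    (h : ∀ p ∈ S, ∀ q ∈ T, p ≠ q ∧ ¬ p <+: q ∧ ¬ q <+: p) : (S ∪ T).card = S.card + T.card :=
  card_union_of_disjoint (disjoint_left.2 fun p hp hq => (h p hp p hq).1 rfl)

lemma degree_node (l r : BT) : (node l r).degree = (node l nil).degree + (node nil r).degree := by
  rw [degree_eq_iff, leftVertices_node, rightVertices_node,
    card_union_of_incomparable (incomparable_leftVertices l r),
    card_union_of_incomparable (incomparable_rightVertices l r)]
  simp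

lemma degree_node_nil {l : BT} (hl : l ≠ nil) :
    (node l nil).degree = l.degree + Finsupp.single 0 1 := by
  rw [degree_eq_iff, leftVertices_node_nil hl, rightVertices_node_nil, card_map, card_map,
    card_insert_of_notMem fun h => (mem_paths_of_mem_leftVertices h).2 rfl]
  simp

lemma degree_nil_node {r : BT} (hr : r ≠ nil) :
    (node nil r).degree = r.degree + Finsupp.single 1 1 := by
  rw [degree_eq_iff, leftVertices_nil_node, rightVertices_nil_node hr, card_map, card_map,
    card_insert_of_notMem fun h => (mem_paths_of_mem_rightVertices h).2 rfl]
  simp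

lemma degree_leaf : (node nil nil).degree = 0 := by
  rw [degree_eq_iff, leftVertices_nil_node, rightVertices_node_nil]
  simp [leftVertices, rightVertices, paths]

lemma size_node (l r : BT) : (node l r).size = l.size + r.size + 1 := by
  simp [size, paths]

lemma size_eq_of_ne_nil {B : BT} (hB : B ≠ nil) :
    B.size = B.leftVertices.card + B.rightVertices.card + 1 := by
  induction B with
  | nil => exact absurd rfl hB
  | node l r ihl ihr =>
    have hl : l.size = (node l nil).degree 0 + (node l nil).degree 1 := by
      rcases eq_or_ne l nil with rfl | hl
      · simp [degree_leaf, size, paths]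
      · simp [degree_node_nil hl, ihl hl]
        ring
    have hr : r.size = (node nil r).degree 0 + (node nil r).degree 1 := by
      rcases eq_or_ne r nil with rfl | hr
      · simp [degree_leaf, size, paths]
      · simp [degree_nil_node hr, ihr hr]
        ring
    rw [size_node, hl, hr, ← degree_zero (node l r), ← degree_one (node l r), degree_node l r]
    simp only [Finsupp.add_apply]
    ring

lemma finite_setOf_size_le (n : ℕ) : {B : BT | B.size ≤ n}.Finite := by
  induction n with
  | zero =>
    refine (Set.finite_singleton nil).subset fun B hB => ?_
    cases B with
    | nil => rfl
    | node l r => simp [size_node] at hB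
  | succ n ih =>
    refine ((ih.image2 node ih).insert nil).subset fun B hB => ?_
    cases B with
    | nil => exact Set.mem_insert _ _
    | node l r =>
      rw [Set.mem_ofPred_eq, size_node] at hB
      exact Or.inr ⟨l, by simp; omega, r, by simp; omega, rfl⟩

lemma finite_setOf_degree_eq (e : Fin 2 →₀ ℕ) : {B : BT | B.degree = e}.Finite := by
  refine (finite_setOf_size_le (e 0 + e 1 + 1)).subset fun B hB => ?_
  rcases eq_or_ne B nil with rfl | hB'
  · simp [size, paths]
  · have hB : B.degree = e := hB
    show B.size ≤ _
    rw [size_eq_of_ne_nil hB', ← degree_zero, ← degree_one, hB]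

noncomputable def shapes (e : Fin 2 →₀ ℕ) : Finset BT :=
  (finite_setOf_degree_eq e).toFinset.filter (· ≠ nil)

@[simp] lemma mem_shapes {e : Fin 2 →₀ ℕ} {B : BT} : B ∈ shapes e ↔ B ≠ nil ∧ B.degree = e := by
  simp [shapes, and_comm]

/-- Left subtrees of a root, the empty one included: it accounts for the `1` in `1 + ∫ₓ N`. -/
noncomputable def leftShapes (p : Fin 2 →₀ ℕ) : Finset BT :=
  ((finite_setOf_degree_eq p).preimage (f := fun l => node l nil)
    fun _ _ _ _ h => by injection h).toFinset

@[simp] lemma mem_leftShapes {p : Fin 2 →₀ ℕ} {l : BT} :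
    l ∈ leftShapes p ↔ (node l nil).degree = p := by
  simp [leftShapes]

noncomputable def rightShapes (q : Fin 2 →₀ ℕ) : Finset BT :=
  ((finite_setOf_degree_eq q).preimage (f := fun r => node nil r)
    fun _ _ _ _ h => by injection h).toFinset

@[simp] lemma mem_rightShapes {q : Fin 2 →₀ ℕ} {r : BT} :
    r ∈ rightShapes q ↔ (node nil r).degree = q := by
  simp [rightShapes]

end BT

open BT

lemma natCount_eq_sum (e : Fin 2 →₀ ℕ) :
    natCount (e 0) (e 1) = ∑ B ∈ shapes e, Nat.card (NAT B) := by
  have hP (B : BT) : B ∈ shapes e ↔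
      B ≠ nil ∧ B.leftVertices.card = e 0 ∧ B.rightVertices.card = e 1 := by
    rw [mem_shapes, degree_eq_iff]
  let _ := Fintype.subtype _ hP
  rw [natCount, Nat.card_congr (Equiv.subtypeSigmaEquiv NAT fun B =>
    B ≠ nil ∧ B.leftVertices.card = e 0 ∧ B.rightVertices.card = e 1), Nat.card_sigma,
    sum_subtype _ hP]

open MvPowerSeries

section Calculus

variable (f g : MvPowerSeries (Fin 2) ℚ) (e : Fin 2 →₀ ℕ)

lemma coeff_dX : coeff e (dX f) = (e 0 + 1) * coeff (e + Finsupp.single 0 1) f := rfl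

lemma coeff_dY : coeff e (dY f) = (e 1 + 1) * coeff (e + Finsupp.single 1 1) f := rfl

lemma coeff_intX :
    coeff e (intX f) = if e 0 = 0 then 0 else coeff (e - Finsupp.single 0 1) f / e 0 := rfl

lemma coeff_intY :
    coeff e (intY f) = if e 1 = 0 then 0 else coeff (e - Finsupp.single 1 1) f / e 1 := rfl

lemma dX_add : dX (f + g) = dX f + dX g := by
  ext e; simp [coeff_dX, mul_add]

lemma dY_add : dY (f + g) = dY f + dY g := by
  ext e; simp [coeff_dY, mul_add]

lemma dX_one : dX 1 = 0 := by
  ext e; simp [coeff_dX, coeff_one]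

lemma dX_X_zero : dX (X 0) = 1 := by
  ext e; by_cases h : e = 0 <;> simp [coeff_dX, coeff_one, coeff_X, h]

lemma dX_X_one : dX (X 1) = 0 := by
  ext e; simp [coeff_dX, coeff_X, Finsupp.ext_iff, Fin.forall_fin_two]

lemma dY_X_zero : dY (X 0) = 0 := by
  ext e; simp [coeff_dY, coeff_X, Finsupp.ext_iff, Fin.forall_fin_two]

lemma dY_X_one : dY (X 1) = 1 := by
  ext e; by_cases h : e = 0 <;> simp [coeff_dY, coeff_one, coeff_X, h]

lemma dX_intX : dX (intX f) = f := by
  ext e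
  simp only [coeff_dX, coeff_intX, Finsupp.add_apply, Finsupp.single_eq_same, add_tsub_cancel_right]
  push_cast
  exact mul_div_cancel₀ _ (by positivity)

lemma dY_intY : dY (intY f) = f := by
  ext e
  simp only [coeff_dY, coeff_intY, Finsupp.add_apply, Finsupp.single_eq_same, add_tsub_cancel_right]
  push_cast
  exact mul_div_cancel₀ _ (by positivity)

lemma dY_intX : dY (intX f) = intX (dY f) := by
  ext e
  have hcomm : e + Finsupp.single 1 1 - Finsupp.single 0 1 =
      e - Finsupp.single 0 1 + Finsupp.single 1 1 := by
    ext i; fin_cases i <;> simp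
  simp [coeff_dY, coeff_intX, hcomm, mul_div_assoc]

end Calculus

lemma coeff_natGF (e : Fin 2 →₀ ℕ) : coeff e natGF = ∑ B ∈ shapes e, B.weight := by
  rw [coeff_apply, natGF, natCount_eq_sum, Nat.cast_sum, sum_div]
  refine sum_congr rfl fun B hB => ?_
  obtain ⟨-, rfl⟩ := mem_shapes.1 hB
  simp [weight]

lemma coeff_one_add_intX (p : Fin 2 →₀ ℕ) :
    coeff p (1 + intX natGF) = ∑ l ∈ leftShapes p, (node l nil).weight := by
  by_cases hp : p 0 = 0
  · have hshapes : leftShapes p = if p = 0 then {nil} else ∅ := by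
      ext l
      rcases eq_or_ne l nil with rfl | hl
      · split_ifs with h <;> simp [degree_leaf, h, eq_comm]
      · have : (node l nil).degree ≠ p := fun h => by
          simpa [degree_node_nil hl, hp] using DFunLike.congr_fun h 0
        split_ifs <;> simp [this, hl]
    rw [hshapes, map_add, coeff_one, coeff_intX, if_pos hp]
    split_ifs <;> simp [weight_leaf]
  · have hp' : p ≠ 0 := fun h => hp (by simp [h])
    have hle : Finsupp.single 0 1 ≤ p := by
      rw [Finsupp.single_le_iff]; omega
    have hshapes : leftShapes p = shapes (p - Finsupp.single 0 1) := by
      ext l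
      rcases eq_or_ne l nil with rfl | hl
      · simp [degree_leaf, Ne.symm hp']
      · simp [degree_node_nil hl, hl, eq_tsub_iff_add_eq_of_le hle]
    rw [hshapes, map_add, coeff_one, coeff_intX, if_neg hp', if_neg hp, coeff_natGF, sum_div,
      zero_add]
    refine sum_congr rfl fun l hl => ?_
    obtain ⟨hl, hdeg⟩ := mem_shapes.1 hl
    rw [weight_node_nil hl, ← degree_zero, hdeg]
    simp only [Finsupp.tsub_apply, Finsupp.single_eq_same]
    rw [Nat.cast_sub (Nat.one_le_iff_ne_zero.2 hp), Nat.cast_one, sub_add_cancel]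

lemma coeff_one_add_intY (q : Fin 2 →₀ ℕ) :
    coeff q (1 + intY natGF) = ∑ r ∈ rightShapes q, (node nil r).weight := by
  by_cases hq : q 1 = 0
  · have hshapes : rightShapes q = if q = 0 then {nil} else ∅ := by
      ext r
      rcases eq_or_ne r nil with rfl | hr
      · split_ifs with h <;> simp [degree_leaf, h, eq_comm]
      · have : (node nil r).degree ≠ q := fun h => by
          simpa [degree_nil_node hr, hq] using DFunLike.congr_fun h 1
        split_ifs <;> simp [this, hr]
    rw [hshapes, map_add, coeff_one, coeff_intY, if_pos hq]
    split_ifs <;> simp [weight_leaf]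
  · have hq' : q ≠ 0 := fun h => hq (by simp [h])
    have hle : Finsupp.single 1 1 ≤ q := by
      rw [Finsupp.single_le_iff]; omega
    have hshapes : rightShapes q = shapes (q - Finsupp.single 1 1) := by
      ext r
      rcases eq_or_ne r nil with rfl | hr
      · simp [degree_leaf, Ne.symm hq']
      · simp [degree_nil_node hr, hr, eq_tsub_iff_add_eq_of_le hle]
    rw [hshapes, map_add, coeff_one, coeff_intY, if_neg hq', if_neg hq, coeff_natGF, sum_div,
      zero_add]
    refine sum_congr rfl fun r hr => ?_
    obtain ⟨hr, hdeg⟩ := mem_shapes.1 hr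
    rw [weight_nil_node hr, ← degree_one, hdeg]
    simp only [Finsupp.tsub_apply, Finsupp.single_eq_same]
    rw [Nat.cast_sub (Nat.one_le_iff_ne_zero.2 hq), Nat.cast_one, sub_add_cancel]

/-- A nonempty shape is `node l r`, and its weight and degree split between the hung
subtrees `node l nil` and `node nil r`. -/
theorem natGF_eq_mul : natGF = (1 + intX natGF) * (1 + intY natGF) := by
  ext e
  rw [coeff_mul, coeff_natGF]
  simp_rw [coeff_one_add_intX, coeff_one_add_intY, sum_mul_sum, ← weight_node, ← sum_product']
  rw [sum_sigma']
  symm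
  refine sum_bij (fun y _ => node y.2.1 y.2.2) ?_ ?_ ?_ fun _ _ => rfl
  · rintro ⟨⟨p, q⟩, ⟨l, r⟩⟩ hy
    simp only [mem_sigma, HasAntidiagonal.mem_antidiagonal, mem_product, mem_leftShapes,
      mem_rightShapes] at hy
    simp [degree_node l r, hy.2.1, hy.2.2, hy.1]
  · rintro ⟨⟨p, q⟩, ⟨l, r⟩⟩ hy ⟨⟨p', q'⟩, ⟨l', r'⟩⟩ hy' h
    simp only [mem_sigma, HasAntidiagonal.mem_antidiagonal, mem_product, mem_leftShapes,
      mem_rightShapes] at hy hy'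
    obtain ⟨rfl, rfl⟩ := node.inj h
    rw [← hy.2.1, ← hy.2.2, ← hy'.2.1, ← hy'.2.2]
  · intro B hB
    obtain ⟨hne, rfl⟩ := mem_shapes.1 hB
    cases B with
    | nil => exact absurd rfl hne
    | node l r =>
      exact ⟨⟨((node l nil).degree, (node nil r).degree), (l, r)⟩,
        by simp [degree_node l r], rfl⟩

/-- `∂ₓ ∂_y L = (∂ₓ L) · (∂_y L)`. -/
theorem natL_pde : dX (dY natL) = dX natL * dY natL := by
  have hdX : dX natL = 1 + intY natGF := by
    rw [natL, dX_add, dX_add, dX_X_zero, dX_X_one, dX_intX, add_zero]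
  have hdY : dY natL = 1 + intX natGF := by
    rw [natL, dY_add, dY_add, dY_X_zero, dY_X_one, dY_intX, dY_intY, zero_add]
  rw [hdY, dX_add, dX_one, dX_intX, zero_add, hdX, mul_comm]
  exact natGF_eq_mul
end

section
/- Fix integers d ≥ k ≥ 1 and let M be a (d,k)-ary tree. The number of (d,k)-NATs of shape M equals ∏_{i=1}^d ( (w_i(M) − 1)! / ∏_{U} E_i(U) ), where for each i the inner product runs over all non-root vertices U of M whose direction contains i, E_i(U) is the number of vertices of the subtree rooted at U (including U) whose direction contains i, and w_i(M) = 1 + Σ_{π ∋ i} |D_π(M)| is the i-th coordinate of the root label. -/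
/-- A `(d,k)`-direction: a `k`-element subset of the `d` coordinates. -/
abbrev Dir (d k : ℕ) := {π : Finset (Fin d) // π.card = k}

/-- A `(d,k)`-ary tree: every vertex has at most one child for each `(d,k)`-direction. -/
inductive KTree (d k : ℕ) : Type where
  | node : (Dir d k → Option (KTree d k)) → KTree d k

namespace KTree

variable {d k : ℕ}

/-- The subtree of a `(d,k)`-ary tree at a given position (path of directions),
if the position exists in the tree. -/
def subtreeAt : KTree d k → List (Dir d k) → Option (KTree d k)
  | t, [] => some t
  | .node c, π :: p =>
    match c π with
    | some t => subtreeAt t p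
    | none => none

/-- `p` is (the position of) a vertex of `M`. -/
def isVertex (M : KTree d k) (p : List (Dir d k)) : Prop := (M.subtreeAt p).isSome

end KTree

/-- The direction of the vertex at position `p`: the direction indexing it as a child of its
parent; the root (empty position) has direction `{1,…,d}`. -/
def dirOf {d k : ℕ} (p : List (Dir d k)) : Finset (Fin d) :=
  (p.getLast?).elim Finset.univ Subtype.val

/-- A non-ambiguous tree of dimension `(d,k)` of shape `M`: each vertex of direction `π`
carries a tuple of positive integers indexed by `π` (the root carrying a full `d`-tuple),
encoded as a function `lbl` which vanishes at the unused positions; entries strictly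
decrease from ancestors to descendants, and for each coordinate `i` the `i`-th entries are
pairwise distinct and form an integer interval with minimum `1`. -/
structure KNAT (d k : ℕ) (M : KTree d k) where
  lbl : List (Dir d k) → Fin d → ℕ
  supp : ∀ p i, ¬(M.isVertex p ∧ i ∈ dirOf p) → lbl p i = 0
  anc : ∀ p q, M.isVertex p → M.isVertex q → p <+: q → p ≠ q →
    ∀ i, i ∈ dirOf p → i ∈ dirOf q → lbl q i < lbl p i
  inj : ∀ i : Fin d, Set.InjOn (fun p => lbl p i) {p | M.isVertex p ∧ i ∈ dirOf p}
  interval : ∀ i : Fin d,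
    (fun p => lbl p i) '' {p | M.isVertex p ∧ i ∈ dirOf p} =
      Set.Icc 1 (Set.ncard {p | M.isVertex p ∧ i ∈ dirOf p})

/-- The `i`-th coordinate of the root label, computed from the shape:
`w_i(M) = 1 + Σ_{π ∋ i} |D_π(M)|`. -/
noncomputable def wgeom {d k : ℕ} (M : KTree d k) (i : Fin d) : ℕ :=
  1 + ∑ π : Dir d k,
    if i ∈ π.1 then Set.ncard {p : List (Dir d k) | M.isVertex p ∧ p.getLast? = some π}
    else 0

/-- `Esub M i u`: the number of vertices of the subtree of `M` rooted at `u` (including `u`)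
whose direction contains `i`. -/
noncomputable def Esub {d k : ℕ} (M : KTree d k) (i : Fin d) (u : List (Dir d k)) : ℕ :=
  Set.ncard {v : List (Dir d k) | M.isVertex v ∧ u <+: v ∧ i ∈ dirOf v}

/-!
For each coordinate `i`, the `i`-th entries of a NAT of shape `M` form a bijection from the
vertices whose direction contains `i` onto `1, …, n_i`, strictly decreasing along the ancestor
(prefix) order, and different coordinates do not interact. These vertices form a tree under the
prefix order, rooted at `[]`, with `n_i = w_i(M)`; so the count is the hook length formula for
forests. There the largest label sits on a root `ρ`, deleting `ρ` leaves every other hook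
unchanged, and the hooks of the roots partition the vertex set, whence
`#labellings · ∏ hooks = n!` by induction on `n`.
-/

open Finset Function

section HookLength

variable {α : Type*} (r : α → α → Prop)

@[ext]
structure DecreasingLabeling (V : Set α) where
  lbl : α → ℕ
  lbl_eq_zero : ∀ p ∉ V, lbl p = 0
  lbl_lt_lbl : ∀ p ∈ V, ∀ q ∈ V, r p q → p ≠ q → lbl q < lbl p
  bijOn : Set.BijOn lbl V (Set.Icc 1 V.ncard)

theorem DecreasingLabeling.finite {V : Set α} (hV : V.Finite) :
    Finite (DecreasingLabeling r V) := by
  have := hV.to_subtype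
  refine Finite.of_injective
    (fun f (v : V) => (⟨f.lbl v, f.bijOn.mapsTo v.2⟩ : Set.Icc 1 V.ncard)) fun f g hfg => ?_
  ext p
  by_cases hp : p ∈ V
  · simpa using congr_fun hfg ⟨p, hp⟩
  · rw [f.lbl_eq_zero p hp, g.lbl_eq_zero p hp]

theorem card_decreasingLabeling_empty : Nat.card (DecreasingLabeling r (∅ : Set α)) = 1 := by
  have : Unique (DecreasingLabeling r (∅ : Set α)) :=
    { default := ⟨0, fun _ _ => rfl, by simp, by simp⟩
      uniq := fun f => by ext p; exact f.lbl_eq_zero p (Set.notMem_empty p) }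
  exact Nat.card_unique

namespace DecreasingLabeling

variable {r} {V : Finset α}

theorem lbl_le_card (f : DecreasingLabeling r ↑V) {v : α} (hv : v ∈ V) : f.lbl v ≤ #V := by
  simpa using (f.bijOn.mapsTo hv).2

theorem exists_lbl_eq_card (f : DecreasingLabeling r ↑V) (hV : V.Nonempty) :
    ∃ p ∈ V, f.lbl p = #V := by
  simpa using f.bijOn.surjOn (show #V ∈ Set.Icc 1 (↑V : Set α).ncard by simpa using hV)

end DecreasingLabeling

theorem bijOn_Icc_erase_iff [DecidableEq α] {f : α → ℕ} {V : Finset α} {ρ : α} (hρ : ρ ∈ V)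
    (hf : f ρ = #V) :
    Set.BijOn f ↑(V.erase ρ) (Set.Icc 1 #(V.erase ρ)) ↔ Set.BijOn f ↑V (Set.Icc 1 #V) := by
  have hV : (↑V : Set α) = insert ρ ↑(V.erase ρ) := by simp [hρ]
  have hIcc : Set.Icc 1 #V = insert (f ρ) (Set.Icc 1 #(V.erase ρ)) := by
    rw [hf, ← card_erase_add_one hρ, Set.insert_Icc_right_eq_Icc_add_one (by omega)]
  rw [hV, hIcc, Set.BijOn.insert_iff (by simp) (by simp [hf, card_erase_of_mem hρ])]

variable [DecidableRel r]

def hook (V : Finset α) (v : α) : Finset α := {w ∈ V | r v w}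

variable {r} {V : Finset α} {ρ u v w : α}

theorem mem_hook : w ∈ hook r V v ↔ w ∈ V ∧ r v w := mem_filter

variable [DecidableEq α]

variable (r) in
def roots (V : Finset α) : Finset α := {ρ ∈ V | ∀ u ∈ V, r u ρ → u = ρ}

theorem mem_roots : ρ ∈ roots r V ↔ ρ ∈ V ∧ ∀ u ∈ V, r u ρ → u = ρ := mem_filter

theorem eq_of_rel_of_mem_roots (hρ : ρ ∈ roots r V) (hu : u ∈ V) (h : r u ρ) : u = ρ :=
  (mem_roots.1 hρ).2 u hu h

theorem exists_mem_roots_rel [IsPartialOrder α r] (hw : w ∈ V) : ∃ ρ ∈ roots r V, r ρ w := by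
  -- among the elements of `V` below `w`, one with the fewest elements of `V` below it is a root
  obtain ⟨ρ, hρ, hmin⟩ := exists_min_image {u ∈ V | r u w} (fun u => #{x ∈ V | r x u})
    ⟨w, mem_filter.2 ⟨hw, refl_of r w⟩⟩
  rw [mem_filter] at hρ
  refine ⟨ρ, mem_roots.2 ⟨hρ.1, fun u hu huρ => by_contra fun hne => ?_⟩, hρ.2⟩
  have hlt : #{x ∈ V | r x u} < #{x ∈ V | r x ρ} := by
    refine card_lt_card ((ssubset_iff_of_subset fun x hx => ?_).2 ⟨ρ, ?_, fun hρu => ?_⟩)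
    · rw [mem_filter] at hx ⊢
      exact ⟨hx.1, trans_of r hx.2 huρ⟩
    · exact mem_filter.2 ⟨hρ.1, refl_of r ρ⟩
    · exact hne (antisymm_of r huρ (mem_filter.1 hρu).2)
  exact (hmin u (mem_filter.2 ⟨hu, trans_of r huρ hρ.2⟩)).not_gt hlt

variable (r) in
theorem sum_card_hook_roots [IsPartialOrder α r]
    (hforest : ∀ {a b c : α}, r a c → r b c → r a b ∨ r b a) (V : Finset α) :
    ∑ ρ ∈ roots r V, #(hook r V ρ) = #V := by
  rw [← card_biUnion]
  · congr 1
    ext w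
    simp only [mem_biUnion, mem_hook]
    refine ⟨fun ⟨_, _, hw, _⟩ => hw, fun hw => ?_⟩
    obtain ⟨ρ, hρ, hρw⟩ := exists_mem_roots_rel (r := r) hw
    exact ⟨ρ, hρ, hw, hρw⟩
  · intro ρ₁ h₁ ρ₂ h₂ hne
    refine disjoint_left.2 fun w hw₁ hw₂ => hne ?_
    rcases hforest (mem_hook.1 hw₁).2 (mem_hook.1 hw₂).2 with h | h
    · exact eq_of_rel_of_mem_roots h₂ (mem_roots.1 h₁).1 h
    · exact (eq_of_rel_of_mem_roots h₁ (mem_roots.1 h₂).1 h).symm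

theorem hook_erase_of_mem_roots (hρ : ρ ∈ roots r V) (hv : v ∈ V.erase ρ) :
    hook r (V.erase ρ) v = hook r V v := by
  ext w
  simp only [mem_hook, mem_erase]
  refine ⟨fun ⟨⟨_, hw⟩, hvw⟩ => ⟨hw, hvw⟩, fun ⟨hw, hvw⟩ => ⟨⟨?_, hw⟩, hvw⟩⟩
  rintro rfl
  exact (ne_of_mem_erase hv) (eq_of_rel_of_mem_roots hρ (mem_of_mem_erase hv) hvw)

theorem prod_card_hook_of_mem_roots (hρ : ρ ∈ roots r V) :
    ∏ v ∈ V, #(hook r V v) = #(hook r V ρ) * ∏ v ∈ V.erase ρ, #(hook r (V.erase ρ) v) := by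
  rw [← mul_prod_erase V _ (mem_roots.1 hρ).1]
  exact congrArg _ (prod_congr rfl fun v hv => by rw [hook_erase_of_mem_roots hρ hv])

namespace DecreasingLabeling

def eraseTop (f : DecreasingLabeling r ↑V) (hρ : ρ ∈ V) (hf : f.lbl ρ = #V) :
    DecreasingLabeling r ↑(V.erase ρ) where
  lbl := update f.lbl ρ 0
  lbl_eq_zero p hp := by
    rcases eq_or_ne p ρ with rfl | hpρ
    · exact update_self ..
    · rw [update_of_ne hpρ]
      exact f.lbl_eq_zero p (by simpa [hpρ] using hp)
  lbl_lt_lbl p hp q hq := by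
    rw [update_of_ne (ne_of_mem_erase hp), update_of_ne (ne_of_mem_erase hq)]
    exact f.lbl_lt_lbl p (mem_of_mem_erase hp) q (mem_of_mem_erase hq)
  bijOn := by
    rw [Set.ncard_coe_finset]
    refine ((bijOn_Icc_erase_iff hρ hf).2 ?_).congr fun p hp =>
      (update_of_ne (ne_of_mem_erase hp) ..).symm
    simpa using f.bijOn

def insertTop (hρ : ρ ∈ roots r V) (g : DecreasingLabeling r ↑(V.erase ρ)) :
    DecreasingLabeling r ↑V where
  lbl := update g.lbl ρ #V
  lbl_eq_zero p hp := by
    rw [update_of_ne (ne_of_mem_of_not_mem (mem_roots.1 hρ).1 hp).symm]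
    exact g.lbl_eq_zero p fun h => hp (mem_of_mem_erase h)
  lbl_lt_lbl p hp q hq hpq hne := by
    have hqρ : q ≠ ρ := by
      rintro rfl
      exact hne (eq_of_rel_of_mem_roots hρ hp hpq)
    have hq' : q ∈ V.erase ρ := mem_erase.2 ⟨hqρ, hq⟩
    rw [update_of_ne hqρ]
    rcases eq_or_ne p ρ with rfl | hpρ
    · rw [update_self]
      exact (g.lbl_le_card hq').trans_lt (card_erase_lt_of_mem hp)
    · rw [update_of_ne hpρ]
      exact g.lbl_lt_lbl p (mem_erase.2 ⟨hpρ, hp⟩) q hq' hpq hne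
  bijOn := by
    rw [Set.ncard_coe_finset, ← bijOn_Icc_erase_iff (mem_roots.1 hρ).1 (update_self ..)]
    refine Set.BijOn.congr (by simpa only [Set.ncard_coe_finset] using g.bijOn) fun p hp =>
      (update_of_ne (ne_of_mem_erase hp) ..).symm

def fiberEquiv (hρ : ρ ∈ roots r V) :
    {f : DecreasingLabeling r ↑V // f.lbl ρ = #V} ≃ DecreasingLabeling r ↑(V.erase ρ) where
  toFun f := f.1.eraseTop (mem_roots.1 hρ).1 f.2
  invFun g := ⟨insertTop hρ g, update_self ..⟩
  left_inv := by
    rintro ⟨f, hf⟩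
    refine Subtype.ext (DecreasingLabeling.ext ?_)
    change update (update f.lbl ρ 0) ρ #V = f.lbl
    rw [update_idem, ← hf, update_eq_self]
  right_inv g := by
    refine DecreasingLabeling.ext ?_
    change update (update g.lbl ρ #V) ρ 0 = g.lbl
    rw [update_idem, ← g.lbl_eq_zero ρ (by simp), update_eq_self]

theorem mem_roots_of_lbl_eq_card (f : DecreasingLabeling r ↑V) (hv : v ∈ V)
    (hf : f.lbl v = #V) :
    v ∈ roots r V :=
  mem_roots.2 ⟨hv, fun u hu huv => by_contra fun hne =>
    (f.lbl_lt_lbl u hu v hv huv hne).not_ge (hf ▸ f.lbl_le_card hu)⟩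

end DecreasingLabeling

theorem card_decreasingLabeling_eq_sum_roots (hV : V.Nonempty) :
    Nat.card (DecreasingLabeling r ↑V) =
      ∑ ρ ∈ roots r V, Nat.card {f : DecreasingLabeling r ↑V // f.lbl ρ = #V} := by
  classical
  have := DecreasingLabeling.finite r V.finite_toSet
  have := Fintype.ofFinite (DecreasingLabeling r ↑V)
  simp only [Nat.card_eq_fintype_card, Fintype.card_subtype]
  rw [← card_univ, ← card_biUnion]
  · congr 1
    ext f
    simp only [mem_univ, mem_biUnion, mem_filter, true_and, true_iff]
    obtain ⟨p, hp, hf⟩ := f.exists_lbl_eq_card hV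
    exact ⟨p, f.mem_roots_of_lbl_eq_card hp hf, hf⟩
  · intro ρ₁ h₁ ρ₂ h₂ hne
    refine disjoint_left.2 fun f hf₁ hf₂ => hne ?_
    exact f.bijOn.injOn (mem_roots.1 h₁).1 (mem_roots.1 h₂).1
      ((mem_filter.1 hf₁).2.trans (mem_filter.1 hf₂).2.symm)

variable (r) in
theorem card_decreasingLabeling_mul_prod_card_hook [IsPartialOrder α r]
    (hforest : ∀ {a b c : α}, r a c → r b c → r a b ∨ r b a) (V : Finset α) :
    Nat.card (DecreasingLabeling r ↑V) * ∏ v ∈ V, #(hook r V v) = (#V).factorial := by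
  obtain ⟨n, hn⟩ : ∃ n, #V = n := ⟨_, rfl⟩
  induction n generalizing V with
  | zero =>
    obtain rfl := card_eq_zero.1 hn
    simp [card_decreasingLabeling_empty]
  | succ m ih =>
    have hfiber : ∀ ρ ∈ roots r V, Nat.card {f : DecreasingLabeling r ↑V // f.lbl ρ = #V} *
        ∏ v ∈ V, #(hook r V v) = m.factorial * #(hook r V ρ) := by
      intro ρ hρ
      have hm : #(V.erase ρ) = m := by rw [card_erase_of_mem (mem_roots.1 hρ).1]; omega
      rw [Nat.card_congr (DecreasingLabeling.fiberEquiv hρ), prod_card_hook_of_mem_roots hρ, ← hm,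
        ← ih _ hm]
      ring
    rw [card_decreasingLabeling_eq_sum_roots (card_pos.1 (by omega)), sum_mul, sum_congr rfl hfiber,
      ← mul_sum, sum_card_hook_roots r hforest, hn, Nat.factorial_succ, mul_comm]

variable (r) in
theorem card_decreasingLabeling_eq_factorial_div_prod [IsPartialOrder α r]
    (hforest : ∀ {a b c : α}, r a c → r b c → r a b ∨ r b a) (hρ : ρ ∈ V)
    (htop : ∀ v ∈ V, r ρ v) :
    (Nat.card (DecreasingLabeling r ↑V) : ℚ) =
      (#V - 1).factorial / ∏ v ∈ V.erase ρ, (#(hook r V v) : ℚ) := by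
  have hV : 0 < #V := card_pos.2 ⟨ρ, hρ⟩
  have hhook : hook r V ρ = V := filter_true_of_mem htop
  have h := card_decreasingLabeling_mul_prod_card_hook r hforest V
  rw [← mul_prod_erase V _ hρ, hhook, ← Nat.mul_factorial_pred hV.ne', mul_left_comm] at h
  have hpos : ∀ v ∈ V.erase ρ, 0 < #(hook r V v) := fun v hv =>
    card_pos.2 ⟨v, mem_hook.2 ⟨mem_of_mem_erase hv, refl_of r v⟩⟩
  rw [eq_div_iff (prod_ne_zero_iff.2 fun v hv => by exact_mod_cast (hpos v hv).ne')]
  exact_mod_cast Nat.eq_of_mul_eq_mul_left hV h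

end HookLength

namespace KTree

variable {d k : ℕ}

theorem isVertex_nil (M : KTree d k) : M.isVertex [] := by
  cases M
  rfl

theorem isVertex_node_cons {c : Dir d k → Option (KTree d k)} {π : Dir d k} {q : List (Dir d k)} :
    (node c).isVertex (π :: q) ↔ ∃ t, c π = some t ∧ t.isVertex q := by
  cases h : c π <;> simp [isVertex, subtreeAt, h]

theorem finite_setOf_isVertex (M : KTree d k) : {p | M.isVertex p}.Finite :=
  KTree.rec (motive_1 := fun t => {p | t.isVertex p}.Finite)
    (motive_2 := fun o => {p | ∃ t, o = some t ∧ t.isVertex p}.Finite)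
    (fun c ih => by
      refine (((Set.finite_iUnion fun π => (ih π).image (π :: ·))).insert []).subset ?_
      rintro (_ | ⟨π, q⟩) hp
      · exact Set.mem_insert _ _
      · exact Set.mem_insert_of_mem _ (Set.mem_iUnion.2 ⟨π, q, isVertex_node_cons.1 hp, rfl⟩))
    (by simp)
    (fun t ht => by simpa using ht)
    M

noncomputable def vertices (M : KTree d k) : Finset (List (Dir d k)) :=
  M.finite_setOf_isVertex.toFinset

theorem mem_vertices {M : KTree d k} {p : List (Dir d k)} : p ∈ M.vertices ↔ M.isVertex p :=
  Set.Finite.mem_toFinset _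

noncomputable def verticesWith (M : KTree d k) (i : Fin d) : Finset (List (Dir d k)) :=
  {p ∈ M.vertices | i ∈ dirOf p}

variable {M : KTree d k} {i : Fin d}

theorem mem_verticesWith {p : List (Dir d k)} :
    p ∈ M.verticesWith i ↔ M.isVertex p ∧ i ∈ dirOf p := by
  rw [verticesWith, Finset.mem_filter, mem_vertices]

theorem coe_verticesWith : (↑(M.verticesWith i) : Set (List (Dir d k))) =
    {p | M.isVertex p ∧ i ∈ dirOf p} :=
  Set.ext fun _ => mem_verticesWith

theorem nil_mem_verticesWith : [] ∈ M.verticesWith i :=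
  mem_verticesWith.2 ⟨M.isVertex_nil, Finset.mem_univ i⟩

theorem coe_verticesWith_erase_nil :
    (↑((M.verticesWith i).erase []) : Set (List (Dir d k))) =
      {p | M.isVertex p ∧ p ≠ [] ∧ i ∈ dirOf p} := by
  ext p
  simp only [Finset.coe_erase, coe_verticesWith, Set.mem_sdiff, Set.mem_ofPred_eq,
    Set.mem_singleton_iff]
  tauto

end KTree

theorem dirOf_of_getLast?_eq_some {d k : ℕ} {p : List (Dir d k)} {π : Dir d k}
    (h : p.getLast? = some π) : dirOf p = π.1 := by
  simp [dirOf, h]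

theorem wgeom_eq_card_verticesWith {d k : ℕ} (M : KTree d k) (i : Fin d) :
    wgeom M i = #(M.verticesWith i) := by
  classical
  rw [wgeom, eq_comm, card_eq_sum_card_fiberwise (f := List.getLast?) (t := univ)
    fun _ _ => mem_univ _, Fintype.sum_option]
  congr 1
  · rw [card_eq_one]
    refine ⟨[], ext fun p => ?_⟩
    simp only [mem_filter, List.getLast?_eq_none_iff, mem_singleton]
    exact ⟨And.right, fun h => ⟨h ▸ KTree.nil_mem_verticesWith, h⟩⟩
  · refine sum_congr rfl fun π _ => ?_
    split_ifs with hi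
    · rw [← Set.ncard_coe_finset]
      congr 1
      ext p
      simp only [coe_filter, KTree.mem_verticesWith, Set.mem_ofPred_eq]
      exact ⟨fun ⟨⟨hp, _⟩, h⟩ => ⟨hp, h⟩,
        fun ⟨hp, h⟩ => ⟨⟨hp, dirOf_of_getLast?_eq_some h ▸ hi⟩, h⟩⟩
    · refine card_eq_zero.2 (filter_eq_empty_iff.2 fun p hp h => hi ?_)
      exact dirOf_of_getLast?_eq_some h ▸ (KTree.mem_verticesWith.1 hp).2

theorem esub_eq_card_hook {d k : ℕ} (M : KTree d k) (i : Fin d) (u : List (Dir d k)) :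
    Esub M i u = #(hook (· <+: ·) (M.verticesWith i) u) := by
  rw [Esub, ← Set.ncard_coe_finset]
  congr 1
  ext v
  simp only [coe_filter, KTree.mem_verticesWith, hook, Set.mem_ofPred_eq]
  tauto

def knatEquiv {d k : ℕ} (M : KTree d k) :
    KNAT d k M ≃ ∀ i, DecreasingLabeling (· <+: ·) {p | M.isVertex p ∧ i ∈ dirOf p} where
  toFun N i := ⟨fun p => N.lbl p i, fun p hp => N.supp p i hp,
    fun p hp q hq hpq hne => N.anc p q hp.1 hq.1 hpq hne i hp.2 hq.2,
    N.interval i ▸ (N.inj i).bijOn_image⟩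
  invFun g := ⟨fun p i => (g i).lbl p, fun p i => (g i).lbl_eq_zero p,
    fun p q hp hq hpq hne i hip hiq => (g i).lbl_lt_lbl p ⟨hp, hip⟩ q ⟨hq, hiq⟩ hpq hne,
    fun i => (g i).bijOn.injOn, fun i => (g i).bijOn.image_eq⟩
  left_inv _ := rfl
  right_inv _ := rfl

theorem knat_card_hook_formula_general (d k : ℕ) (M : KTree d k) :
    (Nat.card (KNAT d k M) : ℚ) =
      ∏ i : Fin d,
        (((wgeom M i - 1).factorial : ℚ) /
          ∏ᶠ u ∈ {p : List (Dir d k) | M.isVertex p ∧ p ≠ [] ∧ i ∈ dirOf p},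
            (Esub M i u : ℚ)) := by
  rw [Nat.card_congr (knatEquiv M), Nat.card_pi, Nat.cast_prod]
  refine prod_congr rfl fun i _ => ?_
  rw [← KTree.coe_verticesWith, ← KTree.coe_verticesWith_erase_nil, finprod_mem_coe_finset,
    wgeom_eq_card_verticesWith, card_decreasingLabeling_eq_factorial_div_prod (· <+: ·)
      List.prefix_or_prefix_of_prefix KTree.nil_mem_verticesWith fun _ _ => List.nil_prefix]
  simp only [esub_eq_card_hook]

/-- hook formula for `(d,k)`-NATs of a fixed shape `M`:
`|NAT_{d,k}(M)| = ∏_{i=1}^d (w_i(M)−1)! / ∏_U E_i(U)`, the inner product running over the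
non-root vertices `U` of `M` whose direction contains `i`. -/
theorem knat_card_hook_formula (d k : ℕ) (hk : 1 ≤ k) (hkd : k ≤ d) (M : KTree d k) :
    (Nat.card (KNAT d k M) : ℚ) =
      ∏ i : Fin d,
        (((wgeom M i - 1).factorial : ℚ) /
          ∏ᶠ u ∈ {p : List (Dir d k) | M.isVertex p ∧ p ≠ [] ∧ i ∈ dirOf p},
            (Esub M i u : ℚ)) :=
  knat_card_hook_formula_general d k M
end
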